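/- Let (X,p) be a cone-complete TVS-cone metric space over E with cone P, fix e ∈ int P, and let φ : E → E be continuous with φ(P) ⊆ P, φ increasing on P (if a, b ∈ P and a ≤ b then φ(a) ≤ φ(b)), φ(0) = 0, and φ(r·e) ≪ r·e for every real r > 0. If T : X → X satisfies p(Tx, Ty) ≤ φ(p(x,y)) for all x, y ∈ X, then T has a unique fixed point u ∈ X, and for every x ∈ X the sequence of iterates (Tⁿx) cone-converges to u. -/

import Mathlib

open Filter Topology

section Defs

variable {E : Type*} [AddCommGroup E] [Module ℝ E] [TopologicalSpace E]

/-- `P` is a closed, pointed convex cone with nonempty interior in the TVS `E`. -/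
structure IsTVSCone (P : Set E) : Prop where
  add_mem : ∀ ⦃a⦄, a ∈ P → ∀ ⦃b⦄, b ∈ P → a + b ∈ P
  smul_mem : ∀ (r : ℝ), 0 ≤ r → ∀ ⦃a⦄, a ∈ P → r • a ∈ P
  pointed : ∀ a, a ∈ P → -a ∈ P → a = 0
  isClosed : IsClosed P
  int_nonempty : (interior P).Nonempty

/-- `a ≤ b` with respect to the cone `P`. -/
def ConeLe (P : Set E) (a b : E) : Prop := b - a ∈ P

/-- `a ≪ b` with respect to the cone `P`. -/
def ConeLt (P : Set E) (a b : E) : Prop := b - a ∈ interior P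

/-- `p : X × X → E` is a TVS-cone metric over the cone `P`. -/
structure IsConeMetric (P : Set E) {X : Type*} (p : X → X → E) : Prop where
  nonneg : ∀ x y, ConeLe P 0 (p x y)
  eq_zero_iff : ∀ x y, p x y = 0 ↔ x = y
  symm : ∀ x y, p x y = p y x
  triangle : ∀ x y z, ConeLe P (p x y) (p x z + p z y)

/-- The sequence `x` cone-converges to `a`. -/
def ConeConverges (P : Set E) {X : Type*} (p : X → X → E) (x : ℕ → X) (a : X) : Prop :=
  ∀ c, c ∈ interior P → ∃ N, ∀ n ≥ N, ConeLt P (p (x n) a) c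

/-- The sequence `x` is cone-Cauchy. -/
def ConeCauchy (P : Set E) {X : Type*} (p : X → X → E) (x : ℕ → X) : Prop :=
  ∀ c, c ∈ interior P → ∃ N, ∀ n ≥ N, ∀ m ≥ N, ConeLt P (p (x n) (x m)) c

/-- `(X, p)` is cone-complete. -/
def ConeComplete (P : Set E) {X : Type*} (p : X → X → E) : Prop :=
  ∀ x : ℕ → X, ConeCauchy P p x → ∃ a, ConeConverges P p x a

/-- The nonlinear scalarization ξ_e(y) = inf {t : t • e - y ∈ P}. -/
noncomputable def xiScal (P : Set E) (e y : E) : ℝ := sInf {t : ℝ | t • e - y ∈ P}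

/-- The open ball `B(x, c) = {y : p x y ≪ c}`. -/
def coneBall (P : Set E) {X : Type*} (p : X → X → E) (x : X) (c : E) : Set X :=
  {y | ConeLt P (p x y) c}

/-- The cone metric topology `τ_p`, generated by the balls `B(x,c)`, `c ≫ 0`. -/
def coneTopology (P : Set E) {X : Type*} (p : X → X → E) : TopologicalSpace X :=
  TopologicalSpace.generateFrom {s | ∃ x c, c ∈ interior P ∧ s = coneBall P p x c}

end Defs

/-!
The scalarization `ξ_e` turns the problem into a real one. Since `y ≪ t • e ↔ ξ_e y < t` and
every `c ≫ 0` dominates some `δ • e`, the function `d = ξ_e ∘ p` is a metric on `X` whose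
convergent and Cauchy sequences are exactly the cone-convergent and cone-Cauchy ones; so `(X, d)`
is complete. Monotonicity of `φ` turns the contraction condition into
`d (T x) (T y) ≤ ψ (d x y)` with `ψ r = ξ_e (φ (r • e))`, which is nondecreasing, upper
semicontinuous (as `ξ_e` is) and satisfies `ψ r < r` for `r > 0`. The Boyd–Wong argument then
applies: the steps `d (Tⁿ x) (Tⁿ⁺¹ x)` decrease to `0`, the iterates form a Cauchy sequence, and
its limit is the unique fixed point.
-/

section BoydWong

variable {ψ : ℝ → ℝ}

lemma le_self_of_monotoneOn_of_lt (hψ_mono : MonotoneOn ψ (Set.Ici 0))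
    (hψ_lt : ∀ r, 0 < r → ψ r < r) {r : ℝ} (hr : 0 ≤ r) : ψ r ≤ r := by
  rcases hr.lt_or_eq with hr | rfl
  · exact (hψ_lt r hr).le
  · by_contra! h
    exact (hψ_mono Set.self_mem_Ici h.le h.le).not_gt (hψ_lt _ h)

lemma tendsto_zero_of_le_comp (hψ_lt : ∀ r, 0 < r → ψ r < r) (hψ_le : ∀ r, 0 ≤ r → ψ r ≤ r)
    (hψ_usc : UpperSemicontinuous ψ) {a : ℕ → ℝ} (ha_nonneg : ∀ n, 0 ≤ a n)
    (ha : ∀ n, a (n + 1) ≤ ψ (a n)) : Tendsto a atTop (𝓝 0) := by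
  have hanti : Antitone a := antitone_nat_of_succ_le fun n => (ha n).trans (hψ_le _ (ha_nonneg n))
  have hbdd : BddBelow (Set.range a) := ⟨0, Set.forall_mem_range.2 ha_nonneg⟩
  have hlim := tendsto_atTop_ciInf hanti hbdd
  suffices hL : ⨅ n, a n = 0 by rwa [hL] at hlim
  refine (((le_ciInf ha_nonneg).lt_or_eq).resolve_left fun hL => ?_).symm
  -- near the limit `L > 0`, upper semicontinuity keeps `ψ` below `L`, so `a` drops below `L`
  obtain ⟨n, hn⟩ := (hlim.eventually (hψ_usc _ _ (hψ_lt _ hL))).exists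
  exact (ciInf_le hbdd (n + 1)).not_gt ((ha n).trans_lt hn)

variable {X : Type*} {T : X → X}

lemma cauchySeq_iterate_of_dist_le_comp [PseudoMetricSpace X]
    (hψ_mono : MonotoneOn ψ (Set.Ici 0)) (hψ_lt : ∀ r, 0 < r → ψ r < r)
    (hψ_usc : UpperSemicontinuous ψ) (hT : ∀ x y, dist (T x) (T y) ≤ ψ (dist x y)) (x : X) :
    CauchySeq fun n => T^[n] x := by
  have hψ_le := fun r => le_self_of_monotoneOn_of_lt hψ_mono hψ_lt (r := r)
  have hstep : Tendsto (fun n => dist (T^[n] x) (T^[n + 1] x)) atTop (𝓝 0) :=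
    tendsto_zero_of_le_comp hψ_lt hψ_le hψ_usc (fun _ => dist_nonneg) fun n => by
      simpa only [Function.iterate_succ_apply'] using hT _ _
  refine Metric.cauchySeq_iff'.2 fun ε hε => ?_
  obtain ⟨N, hN⟩ := (hstep.eventually (gt_mem_nhds (sub_pos.2 (hψ_lt _ (half_pos hε))))).exists
  -- the iterates stay in the closed `ε / 2`-ball around `T^[N] x`, since `T` maps it into itself
  have hball : ∀ k, dist (T^[N + k] x) (T^[N] x) ≤ ε / 2 := by
    intro k
    induction k with
    | zero => simpa using (half_pos hε).le
    | succ k ih =>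
      calc dist (T^[N + (k + 1)] x) (T^[N] x)
          ≤ dist (T (T^[N + k] x)) (T (T^[N] x)) + dist (T^[N] x) (T^[N + 1] x) := by
            rw [← Function.iterate_succ_apply' T (N + k), ← Function.iterate_succ_apply' T N,
              dist_comm (T^[N] x)]
            exact dist_triangle _ _ _
        _ ≤ ψ (ε / 2) + (ε / 2 - ψ (ε / 2)) :=
            add_le_add ((hT _ _).trans (hψ_mono dist_nonneg (half_pos hε).le ih)) hN.le
        _ = ε / 2 := by ring
  refine ⟨N, fun n hn => ?_⟩
  obtain ⟨k, rfl⟩ := Nat.exists_eq_add_of_le hn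
  exact (hball k).trans_lt (half_lt_self hε)

theorem exists_fixedPoint_of_dist_le_comp [MetricSpace X] [CompleteSpace X] [Nonempty X]
    (hψ_mono : MonotoneOn ψ (Set.Ici 0)) (hψ_lt : ∀ r, 0 < r → ψ r < r)
    (hψ_usc : UpperSemicontinuous ψ) (hT : ∀ x y, dist (T x) (T y) ≤ ψ (dist x y)) :
    ∃ u, T u = u ∧ (∀ v, T v = v → v = u) ∧ ∀ x, Tendsto (fun n => T^[n] x) atTop (𝓝 u) := by
  have hT_cont : Continuous T := (LipschitzWith.of_dist_le_mul (K := 1) fun x y => by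
    simpa using (hT x y).trans (le_self_of_monotoneOn_of_lt hψ_mono hψ_lt dist_nonneg)).continuous
  have hfix : ∀ x u, Tendsto (fun n => T^[n] x) atTop (𝓝 u) → T u = u := fun _ _ hu =>
    isFixedPt_of_tendsto_iterate hu hT_cont.continuousAt
  have huniq : ∀ u v, T u = u → T v = v → u = v := fun u v hu hv => by
    by_contra! hne
    have hpos := dist_pos.2 hne
    have := hT u v
    rw [hu, hv] at this
    exact (hψ_lt _ hpos).not_ge this
  have hlim : ∀ x, ∃ u, Tendsto (fun n => T^[n] x) atTop (𝓝 u) := fun x =>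
    cauchySeq_tendsto_of_complete (cauchySeq_iterate_of_dist_le_comp hψ_mono hψ_lt hψ_usc hT x)
  obtain ⟨u, hu⟩ := hlim (Classical.arbitrary X)
  refine ⟨u, hfix _ _ hu, fun v hv => huniq _ _ hv (hfix _ _ hu), fun x => ?_⟩
  obtain ⟨w, hw⟩ := hlim x
  rwa [huniq _ _ (hfix _ _ hw) (hfix _ _ hu)] at hw

end BoydWong

lemma exists_pos_sub_smul_mem_interior {E : Type*} [AddCommGroup E] [Module ℝ E]
    [TopologicalSpace E] [IsTopologicalAddGroup E] [ContinuousSMul ℝ E] {P : Set E} {a : E}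
    (ha : a ∈ interior P) (y : E) : ∃ ε : ℝ, 0 < ε ∧ a - ε • y ∈ interior P := by
  have hlim : Tendsto (fun s : ℝ => a - s • y) (𝓝[>] 0) (𝓝 a) :=
    ((continuous_const.sub (continuous_id.smul continuous_const)).tendsto' 0 a
      (by simp)).mono_left nhdsWithin_le_nhds
  exact ((hlim.eventually (isOpen_interior.mem_nhds ha)).and self_mem_nhdsWithin).exists.imp
    fun _ h => ⟨h.2, h.1⟩

namespace IsTVSCone

open scoped Pointwise

variable {E : Type*} [AddCommGroup E] [Module ℝ E] [TopologicalSpace E] {P : Set E} {e : E}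

lemma zero_mem (hP : IsTVSCone P) : (0 : E) ∈ P := by
  obtain ⟨a, ha⟩ := hP.int_nonempty
  simpa using hP.smul_mem 0 le_rfl (interior_subset ha)

lemma nonneg_of_smul_mem (hP : IsTVSCone P) (he : e ∈ P) (hne : e ≠ 0) {t : ℝ}
    (ht : t • e ∈ P) : 0 ≤ t := by
  by_contra! htneg
  have hneg : -(t • e) ∈ P := by simpa [neg_smul] using hP.smul_mem (-t) (by linarith) he
  exact hne ((smul_eq_zero.1 (hP.pointed _ ht hneg)).resolve_left htneg.ne)

lemma smul_mem_interior [ContinuousConstSMul ℝ E] (hP : IsTVSCone P) {r : ℝ} (hr : 0 < r) {a : E}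
    (ha : a ∈ interior P) : r • a ∈ interior P := by
  have hrP : r • P ⊆ P := Set.smul_set_subset_iff.2 fun _ hx => hP.smul_mem r hr.le hx
  exact interior_mono hrP ((interior_smul₀ hr.ne' P).symm ▸ Set.smul_mem_smul_set ha)

variable [IsTopologicalAddGroup E]

lemma add_mem_interior (hP : IsTVSCone P) {a b : E} (ha : a ∈ interior P) (hb : b ∈ P) :
    a + b ∈ interior P :=
  interior_mono (Set.add_subset_iff.2 fun _ hx _ hy => hP.add_mem hx hy)
    (subset_interior_add_left (Set.add_mem_add ha hb))

lemma coneLt_of_coneLe_of_coneLt (hP : IsTVSCone P) {a b c : E} (hab : ConeLe P a b)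
    (hbc : ConeLt P b c) : ConeLt P a c := by
  simpa [ConeLt] using hP.add_mem_interior hbc hab

lemma coneLt_of_coneLt_of_coneLe (hP : IsTVSCone P) {a b c : E} (hab : ConeLt P a b)
    (hbc : ConeLe P b c) : ConeLt P a c := by
  simpa [ConeLt, add_comm] using hP.add_mem_interior hab hbc

variable [ContinuousSMul ℝ E]

lemma subsingleton_of_zero_mem_interior (hP : IsTVSCone P) (h0 : (0 : E) ∈ interior P) :
    Subsingleton E := by
  have hall : ∀ y : E, y ∈ P := fun y => by
    obtain ⟨ε, hε, hy⟩ := exists_pos_sub_smul_mem_interior h0 (-y)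
    have := hP.smul_mem ε⁻¹ (inv_nonneg.2 hε.le) (interior_subset hy)
    simpa [smul_smul, inv_mul_cancel₀ hε.ne'] using this
  exact ⟨fun a b => sub_eq_zero.1 (hP.pointed _ (hall _) (hall _))⟩

lemma nonempty_setOf_smul_sub_mem (hP : IsTVSCone P) (he : e ∈ interior P) (y : E) :
    {t : ℝ | t • e - y ∈ P}.Nonempty := by
  obtain ⟨ε, hε, hy⟩ := exists_pos_sub_smul_mem_interior he y
  refine ⟨ε⁻¹, ?_⟩
  simpa [smul_sub, smul_smul, inv_mul_cancel₀ hε.ne'] using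
    hP.smul_mem ε⁻¹ (inv_nonneg.2 hε.le) (interior_subset hy)

lemma bddBelow_setOf_smul_sub_mem (hP : IsTVSCone P) (he : e ∈ interior P) (hne : e ≠ 0)
    (y : E) : BddBelow {t : ℝ | t • e - y ∈ P} := by
  obtain ⟨ε, hε, hy⟩ := exists_pos_sub_smul_mem_interior he (-y)
  refine ⟨-ε⁻¹, fun t ht => ?_⟩
  have hsum : (ε * t + 1) • e ∈ P := by
    convert hP.add_mem (hP.smul_mem ε hε.le ht) (interior_subset hy) using 1
    simp only [add_smul, mul_smul, one_smul, smul_sub, smul_neg]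
    abel
  have := hP.nonneg_of_smul_mem (interior_subset he) hne hsum
  rw [neg_le_iff_add_nonneg, ← mul_nonneg_iff_of_pos_left hε, mul_add, mul_inv_cancel₀ hε.ne']
  linarith

lemma coneLe_xiScal_smul (hP : IsTVSCone P) (he : e ∈ interior P) (hne : e ≠ 0) (y : E) :
    ConeLe P y (xiScal P e y • e) :=
  IsClosed.csInf_mem (hP.isClosed.preimage (by fun_prop))
    (hP.nonempty_setOf_smul_sub_mem he y) (hP.bddBelow_setOf_smul_sub_mem he hne y)

lemma xiScal_le_iff (hP : IsTVSCone P) (he : e ∈ interior P) (hne : e ≠ 0) {y : E} {t : ℝ} :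
    xiScal P e y ≤ t ↔ ConeLe P y (t • e) := by
  refine ⟨fun h => ?_, csInf_le (hP.bddBelow_setOf_smul_sub_mem he hne y)⟩
  have hgap : (t - xiScal P e y) • e ∈ P := hP.smul_mem _ (sub_nonneg.2 h) (interior_subset he)
  simpa [ConeLe, sub_smul] using hP.add_mem hgap (hP.coneLe_xiScal_smul he hne y)

lemma xiScal_lt_iff (hP : IsTVSCone P) (he : e ∈ interior P) (hne : e ≠ 0) {y : E} {t : ℝ} :
    xiScal P e y < t ↔ ConeLt P y (t • e) := by
  constructor
  · intro h
    have hgap : ConeLt P (xiScal P e y • e) (t • e) := by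
      simpa [ConeLt, sub_smul] using hP.smul_mem_interior (sub_pos.2 h) he
    exact hP.coneLt_of_coneLe_of_coneLt (hP.coneLe_xiScal_smul he hne y) hgap
  · intro h
    obtain ⟨ε, hε, hy⟩ := exists_pos_sub_smul_mem_interior h e
    have hle : xiScal P e y ≤ t - ε := by
      rw [hP.xiScal_le_iff he hne, ConeLe, sub_smul]
      convert interior_subset hy using 1
      abel
    linarith

lemma xiScal_smul (hP : IsTVSCone P) (he : e ∈ interior P) (hne : e ≠ 0) (t : ℝ) :
    xiScal P e (t • e) = t := by
  refine le_antisymm ((hP.xiScal_le_iff he hne).2 (by simpa [ConeLe] using hP.zero_mem)) ?_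
  refine not_lt.1 fun h => hne ?_
  have h0 : (0 : E) ∈ interior P := by simpa [ConeLt] using (hP.xiScal_lt_iff he hne).1 h
  have := hP.subsingleton_of_zero_mem_interior h0
  exact Subsingleton.elim _ _

lemma xiScal_mono (hP : IsTVSCone P) (he : e ∈ interior P) (hne : e ≠ 0) {x y : E}
    (hxy : ConeLe P x y) : xiScal P e x ≤ xiScal P e y := by
  rw [hP.xiScal_le_iff he hne, ConeLe]
  simpa using hP.add_mem hxy (hP.coneLe_xiScal_smul he hne y)

lemma xiScal_add_le (hP : IsTVSCone P) (he : e ∈ interior P) (hne : e ≠ 0) (x y : E) :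
    xiScal P e (x + y) ≤ xiScal P e x + xiScal P e y := by
  rw [hP.xiScal_le_iff he hne, ConeLe, add_smul]
  convert hP.add_mem (hP.coneLe_xiScal_smul he hne x) (hP.coneLe_xiScal_smul he hne y) using 1
  abel

lemma upperSemicontinuous_xiScal (hP : IsTVSCone P) (he : e ∈ interior P) (hne : e ≠ 0) :
    UpperSemicontinuous (xiScal P e) := fun y t ht => by
  have hopen : IsOpen {z : E | ConeLt P z (t • e)} :=
    isOpen_interior.preimage (continuous_const.sub continuous_id)
  filter_upwards [hopen.mem_nhds ((hP.xiScal_lt_iff he hne).1 ht)] with z hz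
  exact (hP.xiScal_lt_iff he hne).2 hz

lemma monotoneOn_xiScal_comp_smul {φ : E → E} (hP : IsTVSCone P) (he : e ∈ interior P)
    (hne : e ≠ 0) (hφmono : ∀ a ∈ P, ∀ b ∈ P, ConeLe P a b → ConeLe P (φ a) (φ b)) :
    MonotoneOn (fun r : ℝ => xiScal P e (φ (r • e))) (Set.Ici 0) := by
  intro r hr s hs hrs
  have heP := interior_subset he
  refine hP.xiScal_mono he hne (hφmono _ (hP.smul_mem r hr heP) _ (hP.smul_mem s hs heP) ?_)
  simpa [ConeLe, sub_smul] using hP.smul_mem _ (sub_nonneg.2 hrs) heP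

lemma forall_eventually_coneLt_iff {ι : Type*} (hP : IsTVSCone P) (he : e ∈ interior P)
    (hne : e ≠ 0) {l : Filter ι} {y : ι → E} :
    (∀ c ∈ interior P, ∀ᶠ i in l, ConeLt P (y i) c) ↔
      ∀ ε > 0, ∀ᶠ i in l, xiScal P e (y i) < ε := by
  simp only [hP.xiScal_lt_iff he hne]
  refine ⟨fun h ε hε => h _ (hP.smul_mem_interior hε he), fun h c hc => ?_⟩
  obtain ⟨δ, hδ, hcδ⟩ := exists_pos_sub_smul_mem_interior hc e
  filter_upwards [h δ hδ] with i hi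
  exact hP.coneLt_of_coneLt_of_coneLe hi (interior_subset hcδ)

variable {X : Type*} {p : X → X → E} [PseudoMetricSpace X]

lemma coneConverges_iff_tendsto (hP : IsTVSCone P) (he : e ∈ interior P) (hne : e ≠ 0)
    (hdist : ∀ x y, dist x y = xiScal P e (p x y)) {x : ℕ → X} {a : X} :
    ConeConverges P p x a ↔ Tendsto x atTop (𝓝 a) := by
  simp only [ConeConverges, Metric.tendsto_nhds, hdist, ← eventually_atTop,
    hP.forall_eventually_coneLt_iff he hne]

lemma coneCauchy_iff_cauchySeq (hP : IsTVSCone P) (he : e ∈ interior P) (hne : e ≠ 0)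
    (hdist : ∀ x y, dist x y = xiScal P e (p x y)) {x : ℕ → X} :
    ConeCauchy P p x ↔ CauchySeq x := by
  have := hP.forall_eventually_coneLt_iff he hne (l := atTop)
    (y := fun n : ℕ × ℕ => p (x n.1) (x n.2))
  simp only [eventually_atTop_prod_self, ← hdist] at this
  simpa only [ConeCauchy, Metric.cauchySeq_iff, ge_iff_le, imp_forall_iff] using this

lemma completeSpace_of_coneComplete (hP : IsTVSCone P) (he : e ∈ interior P) (hne : e ≠ 0)
    (hdist : ∀ x y, dist x y = xiScal P e (p x y)) (hcomplete : ConeComplete P p) :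
    CompleteSpace X :=
  Metric.complete_of_cauchySeq_tendsto fun x hx =>
    (hcomplete x ((hP.coneCauchy_iff_cauchySeq he hne hdist).2 hx)).imp fun _ =>
      (hP.coneConverges_iff_tendsto he hne hdist).1

end IsTVSCone

namespace IsConeMetric

variable {E X : Type*} [AddCommGroup E] {P : Set E} {e : E} {p : X → X → E}

lemma subsingleton [Subsingleton E] (hp : IsConeMetric P p) : Subsingleton X :=
  ⟨fun x y => (hp.eq_zero_iff x y).1 (Subsingleton.elim _ _)⟩

variable [Module ℝ E] [TopologicalSpace E] [IsTopologicalAddGroup E] [ContinuousSMul ℝ E]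

noncomputable abbrev toMetricSpace (hp : IsConeMetric P p) (hP : IsTVSCone P)
    (he : e ∈ interior P) (hne : e ≠ 0) : MetricSpace X where
  dist x y := xiScal P e (p x y)
  dist_self x := by rw [(hp.eq_zero_iff x x).2 rfl, ← zero_smul ℝ e, hP.xiScal_smul he hne]
  dist_comm x y := by rw [hp.symm]
  dist_triangle x y z :=
    (hP.xiScal_mono he hne (hp.triangle x z y)).trans (hP.xiScal_add_le he hne _ _)
  eq_of_dist_eq_zero {x y} h := by
    refine (hp.eq_zero_iff x y).1 (hP.pointed _ (by simpa [ConeLe] using hp.nonneg x y) ?_)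
    simpa [ConeLe] using (hP.xiScal_le_iff he hne).1 h.le

lemma dist_le_xiScal_comp_smul [PseudoMetricSpace X] {φ : E → E} {T : X → X}
    (hp : IsConeMetric P p) (hP : IsTVSCone P) (he : e ∈ interior P) (hne : e ≠ 0)
    (hdist : ∀ x y, dist x y = xiScal P e (p x y))
    (hφmono : ∀ a ∈ P, ∀ b ∈ P, ConeLe P a b → ConeLe P (φ a) (φ b))
    (hT : ∀ x y, ConeLe P (p (T x) (T y)) (φ (p x y))) (x y : X) :
    dist (T x) (T y) ≤ xiScal P e (φ (dist x y • e)) := by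
  have hpP : p x y ∈ P := by simpa [ConeLe] using hp.nonneg x y
  have hdP : dist x y • e ∈ P := hP.smul_mem _ dist_nonneg (interior_subset he)
  rw [hdist (T x)]
  refine (hP.xiScal_mono he hne (hT x y)).trans (hP.xiScal_mono he hne ?_)
  exact hφmono _ hpP _ hdP (hdist x y ▸ hP.coneLe_xiScal_smul he hne (p x y))

end IsConeMetric

theorem stmt_19_general {E X : Type*} [AddCommGroup E] [Module ℝ E] [TopologicalSpace E]
    [IsTopologicalAddGroup E] [ContinuousSMul ℝ E] [Nonempty X]
    (P : Set E) (hP : IsTVSCone P) (p : X → X → E) (hp : IsConeMetric P p)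
    (hcomplete : ConeComplete P p)
    (e : E) (he : e ∈ interior P) (T : X → X) (φ : E → E) (hφcont : Continuous φ)
    (hφmono : ∀ a ∈ P, ∀ b ∈ P, ConeLe P a b → ConeLe P (φ a) (φ b))
    (hφlt : ∀ r : ℝ, 0 < r → ConeLt P (φ (r • e)) (r • e))
    (hT : ∀ x y : X, ConeLe P (p (T x) (T y)) (φ (p x y))) :
    ∃ u : X, T u = u ∧ (∀ v : X, T v = v → v = u) ∧
      ∀ x : X, ConeConverges P p (fun n => T^[n] x) u := by
  obtain rfl | hne := eq_or_ne e 0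
  · have := hP.subsingleton_of_zero_mem_interior he
    have := hp.subsingleton
    obtain ⟨x₀⟩ := ‹Nonempty X›
    refine ⟨x₀, Subsingleton.elim _ _, fun _ _ => Subsingleton.elim _ _,
      fun _ c hc => ⟨0, fun n _ => ?_⟩⟩
    simpa [ConeLt, Subsingleton.elim (p _ _) 0] using hc
  let := hp.toMetricSpace hP he hne
  have hdist : ∀ x y, dist x y = xiScal P e (p x y) := fun _ _ => rfl
  have := hP.completeSpace_of_coneComplete he hne hdist hcomplete
  obtain ⟨u, hu, huniq, hlim⟩ := exists_fixedPoint_of_dist_le_comp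
    (hP.monotoneOn_xiScal_comp_smul he hne hφmono)
    (fun r hr => (hP.xiScal_lt_iff he hne).2 (hφlt r hr))
    ((hP.upperSemicontinuous_xiScal he hne).comp
      (hφcont.comp (continuous_id.smul continuous_const)))
    (hp.dist_le_xiScal_comp_smul hP he hne hdist hφmono hT)
  exact ⟨u, hu, huniq, fun x => (hP.coneConverges_iff_tendsto he hne hdist).2 (hlim x)⟩

/-- a nonlinear contraction with `φ(r • e) ≪ r • e` on a cone-complete
TVS-cone metric space has a unique fixed point, and all Picard iterates cone-converge to it. -/
theorem stmt_19 {E X : Type*} [AddCommGroup E] [Module ℝ E] [TopologicalSpace E]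
    [IsTopologicalAddGroup E] [ContinuousSMul ℝ E] [T2Space E] [Nonempty X]
    (P : Set E) (hP : IsTVSCone P) (p : X → X → E) (hp : IsConeMetric P p)
    (hcomplete : ConeComplete P p)
    (e : E) (he : e ∈ interior P) (T : X → X) (φ : E → E) (hφcont : Continuous φ)
    (hφP : ∀ a ∈ P, φ a ∈ P)
    (hφmono : ∀ a ∈ P, ∀ b ∈ P, ConeLe P a b → ConeLe P (φ a) (φ b))
    (hφ0 : φ 0 = 0)
    (hφlt : ∀ r : ℝ, 0 < r → ConeLt P (φ (r • e)) (r • e))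
    (hT : ∀ x y : X, ConeLe P (p (T x) (T y)) (φ (p x y))) :
    ∃ u : X, T u = u ∧ (∀ v : X, T v = v → v = u) ∧
      ∀ x : X, ConeConverges P p (fun n => T^[n] x) u :=
  stmt_19_general P hP p hp hcomplete e he T φ hφcont hφmono hφlt hT
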